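/- Completeness of the honest-prover round reduction in the sumcheck protocol: if v = ∑_{σ ∈ substs ({x} ∪ V) H} eval p σ with x ∉ V and vars p ⊆ {x} ∪ V, and q = ∑_{σ ∈ substs V H} inst p σ is the honest prover's message, then the verifier's evaluation check succeeds: v = ∑_{h ∈ H} eval q [x ↦ h]. -/
import Mathlib


open MvPolynomial

/-- Partially evaluate `p` under a partial substitution `σ`. -/
noncomputable def inst {V R : Type*} [CommRing R]
    (p : MvPolynomial V R) (σ : V → Option R) : MvPolynomial V R :=
  aeval (fun x => (σ x).elim (X x) C) p

/-- Evaluate `p` fully, using `σ` where defined and `0` as a default elsewhere. -/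
noncomputable def evalSubst {V R : Type*} [CommRing R]
    (p : MvPolynomial V R) (σ : V → Option R) : R :=
  eval (fun x => (σ x).getD 0) p

/-- `ρ` overridden by `σ` (with `σ` taking priority on its domain). -/
def override {V R : Type*} (ρ σ : V → Option R) : V → Option R :=
  fun x => (σ x).elim (ρ x) some

/-- The partial substitution with domain `W` determined by a function `f : W → H`. -/
def toSubst {V R : Type*} [DecidableEq V] (W : Finset V) (H : Finset R)
    (f : ↥W → ↥H) : V → Option R :=
  fun x => if h : x ∈ W then some ((f ⟨x, h⟩ : ↥H) : R) else none

/-- The singleton substitution `[x ↦ r]`. -/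
def single {V R : Type*} [DecidableEq V] (x : V) (r : R) : V → Option R :=
  fun y => if y = x then some r else none

lemma evalSubst_inst {V R : Type*} [CommRing R]
    (p : MvPolynomial V R) (σ τ : V → Option R) :
    evalSubst (inst p σ) τ = evalSubst p (override τ σ) := by
  unfold evalSubst inst override
  rw [aeval_eq_bind₁]
  show eval₂Hom (RingHom.id R) _ _ = _
  rw [eval₂Hom_bind₁]
  apply congrFun
  apply congrArg
  congr 1
  funext y
  cases σ y <;> simp

theorem honest_round_evaluation_check {V F : Type*} [Field F] [DecidableEq V]
    (p : MvPolynomial V F) (x : V) (W : Finset V) (H : Finset F) (v : F)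
    (hx : x ∉ W) (hvars : (↑p.vars : Set V) ⊆ {x} ∪ ↑W) (hH : H.Nonempty)
    (hv : v = ∑ g : (↥(insert x W) → ↥H), evalSubst p (toSubst (insert x W) H g)) :
    v = ∑ h ∈ H,
      evalSubst (∑ f : (↥W → ↥H), inst p (toSubst W H f)) (single x h) := by
  have hsum : ∀ h : F, evalSubst (∑ f : (↥W → ↥H), inst p (toSubst W H f)) (single x h)
      = ∑ f : (↥W → ↥H), evalSubst p (override (single x h) (toSubst W H f)) := by
    intro h
    unfold evalSubst
    rw [map_sum]
    exact Finset.sum_congr rfl fun f _ => evalSubst_inst p _ _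
  simp only [hsum]
  rw [← Finset.sum_coe_sort H fun h => ∑ f : (↥W → ↥H),
    evalSubst p (override (single x h) (toSubst W H f))]
  rw [← Fintype.sum_prod_type (f := fun hf : ↥H × (↥W → ↥H) =>
    evalSubst p (override (single x ↑hf.1) (toSubst W H hf.2)))]
  subst hv
  -- bijection
  apply Fintype.sum_bijective
    (fun g : (↥(insert x W) → ↥H) =>
      ((g ⟨x, Finset.mem_insert_self x W⟩,
        fun w : ↥W => g ⟨w, Finset.mem_insert_of_mem w.2⟩) : ↥H × (↥W → ↥H)))
  · constructor
    · intro g₁ g₂ hg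
      funext y
      obtain ⟨y, hy⟩ := y
      rcases Finset.mem_insert.mp hy with rfl | hyW
      · exact congrArg Prod.fst hg
      · exact congrFun (congrArg Prod.snd hg) ⟨y, hyW⟩
    · rintro ⟨h, f⟩
      refine ⟨fun y => if hy : (y : V) ∈ W then f ⟨y, hy⟩ else h, ?_⟩
      simp only [Prod.mk.injEq]
      constructor
      · simp [hx]
      · funext w
        simp [w.2]
  · intro g
    have hfun : toSubst (insert x W) H g
        = override (single x ↑(g ⟨x, Finset.mem_insert_self x W⟩))
            (toSubst W H fun w : ↥W => g ⟨w, Finset.mem_insert_of_mem w.2⟩) := by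
      funext z
      simp only [override, toSubst, single]
      by_cases hz : z ∈ W
      · have hz' : z ∈ insert x W := Finset.mem_insert_of_mem hz
        simp [hz, hz']
      · by_cases hzx : z = x
        · subst hzx
          simp [hz, Finset.mem_insert_self]
        · simp [hz, hzx, Finset.mem_insert, Ne.symm]
    exact congrArg (fun τ : V → Option F => evalSubst p τ) hfun
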